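/- Let X^T be an (n−r−1)×n real matrix, 1 ≤ r ≤ n−2, whose columns x^1,…,x^n have the property that every subset of size n−r−1 is linearly independent, and suppose the columns of the n×(r+1) matrix consisting of the (r+1)×(r+1) identity block I_{r+1} stacked on top of an (n−r−1)×(r+1) matrix B form a basis of the null space of X^T. Then B has no zero entries. -/

import Mathlib

open Matrix

/-- A configuration `p` in `ℝ^r` is `r`-dimensional if its points affinely span `ℝ^r`. -/
def IsRDimensional {n r : ℕ} (p : Fin n → EuclideanSpace ℝ (Fin r)) : Prop :=
  affineSpan ℝ (Set.range p) = ⊤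

/-- A configuration is in general position in `ℝ^r` if every `r+1` of its points are
affinely independent. -/
def InGeneralPosition {n r : ℕ} (p : Fin n → EuclideanSpace ℝ (Fin r)) : Prop :=
  ∀ s : Finset (Fin n), s.card = r + 1 → AffineIndependent ℝ (fun i : s => p i)

/-- `(G, q)` is equivalent to `(G, p)`: corresponding edge lengths agree. -/
def FrameworkEquiv {n r r' : ℕ} (G : SimpleGraph (Fin n))
    (p : Fin n → EuclideanSpace ℝ (Fin r)) (q : Fin n → EuclideanSpace ℝ (Fin r')) : Prop :=
  ∀ i j : Fin n, G.Adj i j → ‖q i - q j‖ = ‖p i - p j‖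

/-- Two configurations are congruent: all pairwise distances agree. -/
def CongruentConfig {n r r' : ℕ} (p : Fin n → EuclideanSpace ℝ (Fin r))
    (q : Fin n → EuclideanSpace ℝ (Fin r')) : Prop :=
  ∀ i j : Fin n, ‖q i - q j‖ = ‖p i - p j‖

/-- `(G, p)` is universally rigid. -/
def UniversallyRigid {n r : ℕ} (G : SimpleGraph (Fin n))
    (p : Fin n → EuclideanSpace ℝ (Fin r)) : Prop :=
  ∀ r' : ℕ, 1 ≤ r' → r' ≤ n - 1 → ∀ q : Fin n → EuclideanSpace ℝ (Fin r'),
    IsRDimensional q → FrameworkEquiv G p q → CongruentConfig p q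

/-- `G` is `k`-vertex connected. -/
def IsKConnected {n : ℕ} (G : SimpleGraph (Fin n)) (k : ℕ) : Prop :=
  (n = k + 1 ∧ G = ⊤) ∨
  (k + 2 ≤ n ∧ ∀ S : Finset (Fin n), S.card = k - 1 →
    (G.induce ((↑S : Set (Fin n))ᶜ)).Connected)

/-- The configuration matrix of `p`. -/
def configMatrix {n r : ℕ} (p : Fin n → EuclideanSpace ℝ (Fin r)) : Matrix (Fin n) (Fin r) ℝ :=
  Matrix.of fun i k => p i k

/-- `Ω` is a stress matrix of `(G, p)`. -/
def IsStressMatrix {n r : ℕ} (G : SimpleGraph (Fin n)) (p : Fin n → EuclideanSpace ℝ (Fin r))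
    (Ω : Matrix (Fin n) (Fin n) ℝ) : Prop :=
  Ω.IsSymm ∧ (∀ i j : Fin n, i ≠ j → ¬ G.Adj i j → Ω i j = 0) ∧
  Ω * configMatrix p = 0 ∧ Ω *ᵥ (fun _ => (1 : ℝ)) = 0

/-- The matrix `[Pᵀ; eᵀ]` obtained by stacking `Pᵀ` on top of the all-ones row `eᵀ`. -/
def galeStack {n r : ℕ} (p : Fin n → EuclideanSpace ℝ (Fin r)) :
    Matrix (Fin r ⊕ Unit) (Fin n) ℝ :=
  Matrix.fromRows (Matrix.of fun k i => p i k) (Matrix.of fun _ _ => (1 : ℝ))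

/-- `Z` is a Gale matrix of `p`: its columns form a basis of the null space of `[Pᵀ; eᵀ]`. -/
def IsGaleMatrix {n r : ℕ} (p : Fin n → EuclideanSpace ℝ (Fin r))
    (Z : Matrix (Fin n) (Fin (n - r - 1)) ℝ) : Prop :=
  LinearIndependent ℝ (fun j : Fin (n - r - 1) => fun i => Z i j) ∧
  Submodule.span ℝ (Set.range (fun j : Fin (n - r - 1) => fun i => Z i j)) =
    LinearMap.ker (galeStack p).mulVecLin

section

variable {ι κ m R : Type*} [Ring R]

theorem LinearIndepOn.eq_zero_of_vecMul_eq_zero [Fintype ι] {X : Matrix ι m R} {s : Finset ι}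
    (hX : LinearIndepOn R X s) {c : ι → R} (hc : c ᵥ* X = 0) (hsupp : ∀ i ∉ s, c i = 0) :
    ∀ i ∈ s, c i = 0 := by
  refine linearIndepOn_finset_iff.mp hX c ?_
  rw [Finset.sum_subset (Finset.subset_univ s) fun i _ hi => by rw [hsupp i hi, zero_smul],
    ← vecMul_eq_sum, hc]

/-- A zero `B i j` would leave column `j` of `[1; B]` supported on the `|κ|` rows
`{inl j} ∪ inr '' (κ \ {i})`, so their independence forces its `1` at `inl j` to vanish. -/
theorem Matrix.fromRows_one_apply_ne_zero_of_vecMul_eq_zero [Fintype ι] [DecidableEq ι]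
    [Fintype κ] [DecidableEq κ] [Nontrivial R] {X : Matrix (ι ⊕ κ) m R}
    (hX : ∀ s : Finset (ι ⊕ κ), s.card = Fintype.card κ → LinearIndepOn R X s)
    {B : Matrix κ ι R} {j : ι} (hcol : (fun v => fromRows 1 B v j) ᵥ* X = 0) (i : κ) :
    B i j ≠ 0 := by
  intro hBij
  set s : Finset (ι ⊕ κ) := ({j} : Finset ι).disjSum (Finset.univ.erase i)
  have hcard : s.card = Fintype.card κ := by
    have : 0 < Fintype.card κ := Fintype.card_pos_iff.mpr ⟨i⟩
    rw [Finset.card_disjSum, Finset.card_singleton, Finset.card_erase_of_mem (Finset.mem_univ i),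
      Finset.card_univ]
    omega
  have hsupp : ∀ v ∉ s, fromRows 1 B v j = 0 := by
    rintro (k | i') hv
    · have hkj : k ≠ j := by simpa [s] using hv
      rw [fromRows_apply_inl, one_apply_ne hkj]
    · have hi' : i' = i := by simpa [s] using hv
      rw [fromRows_apply_inr, hi', hBij]
  have hone := (hX s hcard).eq_zero_of_vecMul_eq_zero hcol hsupp (Sum.inl j) (by simp [s])
  rw [fromRows_apply_inl, one_apply_eq] at hone
  exact one_ne_zero hone

end

theorem no_zero_entries_of_null_space_basis_general
    (n r : ℕ)
    (X : Matrix (Fin (r + 1) ⊕ Fin (n - r - 1)) (Fin (n - r - 1)) ℝ)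
    (hgen : ∀ s : Finset (Fin (r + 1) ⊕ Fin (n - r - 1)), s.card = n - r - 1 →
      LinearIndependent ℝ (fun i : s => X i.1))
    (B : Matrix (Fin (n - r - 1)) (Fin (r + 1)) ℝ)
    (hspan : Submodule.span ℝ
        (Set.range (fun j : Fin (r + 1) => fun i =>
          (Matrix.fromRows (1 : Matrix (Fin (r + 1)) (Fin (r + 1)) ℝ) B) i j)) =
      LinearMap.ker Xᵀ.mulVecLin) :
    ∀ (i : Fin (n - r - 1)) (j : Fin (r + 1)), B i j ≠ 0 := by
  intro i j
  have hcol : (fun v => fromRows 1 B v j) ∈ LinearMap.ker Xᵀ.mulVecLin :=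
    hspan ▸ Submodule.subset_span ⟨j, rfl⟩
  rw [LinearMap.mem_ker, mulVecLin_apply, mulVec_transpose] at hcol
  exact Matrix.fromRows_one_apply_ne_zero_of_vecMul_eq_zero
    (fun s hs => hgen s (by rwa [Fintype.card_fin] at hs)) hcol i

/-- Within the proof of Lemma 3.1: if (after reordering the nodes) the columns of the
`n × (r+1)` block matrix `[I_{r+1}; B]` form a basis of the null space of `Xᵀ`, where every
`n - r - 1` columns of `Xᵀ` (i.e. rows of `X`) are linearly independent, then `B` has no zero
entries. Here the `n` nodes are indexed by `Fin (r+1) ⊕ Fin (n-r-1)`, the first block carrying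
the identity `I_{r+1}` and the second block carrying `B`. -/
theorem no_zero_entries_of_null_space_basis
    (n r : ℕ) (hr : 1 ≤ r) (hrn : r + 2 ≤ n)
    (X : Matrix (Fin (r + 1) ⊕ Fin (n - r - 1)) (Fin (n - r - 1)) ℝ)
    (hgen : ∀ s : Finset (Fin (r + 1) ⊕ Fin (n - r - 1)), s.card = n - r - 1 →
      LinearIndependent ℝ (fun i : s => X i.1))
    (B : Matrix (Fin (n - r - 1)) (Fin (r + 1)) ℝ)
    (hindep : LinearIndependent ℝ
      (fun j : Fin (r + 1) => fun i => (Matrix.fromRows (1 : Matrix (Fin (r + 1)) (Fin (r + 1)) ℝ) B) i j))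
    (hspan : Submodule.span ℝ
        (Set.range (fun j : Fin (r + 1) => fun i =>
          (Matrix.fromRows (1 : Matrix (Fin (r + 1)) (Fin (r + 1)) ℝ) B) i j)) =
      LinearMap.ker Xᵀ.mulVecLin) :
    ∀ (i : Fin (n - r - 1)) (j : Fin (r + 1)), B i j ≠ 0 :=
  no_zero_entries_of_null_space_basis_general n r X hgen B hspan
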